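/- For a FIFO cache of associativity A and a shared-memory attacker, the maximum number of knowledge sets into which any probing strategy can partition any set of possible initial cache states is at most (A+1)!. -/

import Mathlib

/-- LRU update: accessed block gets age 0; blocks younger than it (or all cached
blocks on a miss) age by one; other blocks are unchanged. -/
def updLRU (A : ℕ) (b : ℕ) (c : ℕ → ℕ) : ℕ → ℕ := fun b' =>
  if b' = b then 0 else if c b' < min (c b) A then c b' + 1 else c b'

/-- FIFO update: hits leave the state unchanged; on a miss the accessed block gets
age 0 and cached blocks age by one (the oldest is evicted). -/
def updFIFO (A : ℕ) (b : ℕ) (c : ℕ → ℕ) : ℕ → ℕ :=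
  if c b < A then c
  else fun b' => if b' = b then 0 else if c b' < A then c b' + 1 else c b'

/-- Generic permutation-policy update with permutation function `P`:
on a hit, ages of cached blocks are permuted by `P (c b)`; on a miss the accessed
block gets age 0 and cached blocks age by one. -/
def updPerm (P : ℕ → ℕ → ℕ) (A : ℕ) (b : ℕ) (c : ℕ → ℕ) : ℕ → ℕ :=
  if c b < A then fun b' => if c b' < A then P (c b) (c b') else c b'
  else fun b' => if b' = b then 0 else if c b' < A then c b' + 1 else c b'

/-- The PLRU permutation function. -/
def piPLRU (a a' : ℕ) : ℕ :=
  if _h1 : a' = a then 0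
  else if _h2 : a % 2 = 0 ∧ a' % 2 = 1 then a'
  else if _h3 : a % 2 = 1 ∧ a' % 2 = 0 then a' + 1
  else 2 * piPLRU (a / 2) (a' / 2)
termination_by a + a'
decreasing_by omega

/-- The PLRU update. -/
def updPLRU (A : ℕ) : ℕ → (ℕ → ℕ) → (ℕ → ℕ) := updPerm piPLRU A

/-- Sequential application of the update function along a trace of accesses. -/
def updTrace (upd : ℕ → (ℕ → ℕ) → (ℕ → ℕ)) : List ℕ → (ℕ → ℕ) → (ℕ → ℕ)
  | [], c => c
  | b :: t, c => updTrace upd t (upd b c)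

/-- States reachable from `c₀` using traces over the set of blocks `B`. -/
def Reach (upd : ℕ → (ℕ → ℕ) → (ℕ → ℕ)) (B : Set ℕ) (c₀ : ℕ → ℕ) : Set (ℕ → ℕ) :=
  {c | ∃ t : List ℕ, (∀ b ∈ t, b ∈ B) ∧ updTrace upd t c₀ = c}

/-- Cache state invariant: ages are at most `A`, and distinct blocks have distinct
ages unless both have age `A` (uncached). -/
def CacheInv (A : ℕ) (c : ℕ → ℕ) : Prop :=
  (∀ b, c b ≤ A) ∧ ∀ b b', c b < A → c b = c b' → b = b'

/-- `c` is filled with `B`: the blocks of `B` occupy the youngest ages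
`{0, …, min (A, |B|−1)}`, and all remaining cache lines are occupied
(by attacker blocks). -/
def FilledWith (A : ℕ) (c : ℕ → ℕ) (B : Finset ℕ) : Prop :=
  CacheInv A c ∧ (∀ a, a < A → ∃ b, c b = a) ∧
    c '' ↑B = Set.Iio (min (A + 1) B.card)

/-- `c` is empty w.r.t. `B`: no block of `B` is cached, and all cache lines are
occupied (by attacker blocks). -/
def EmptyWith (A : ℕ) (c : ℕ → ℕ) (B : Finset ℕ) : Prop :=
  CacheInv A c ∧ (∀ b ∈ B, c b = A) ∧ (∀ a, a < A → ∃ b, c b = a)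

/-- Run a Mealy machine along the inputs of a probe. -/
def mrun {S I O : Type*} (upd : I → S → S) : List (I × O) → S → S
  | [], s => s
  | io :: p, s => mrun upd p (upd io.1 s)

/-- A state `s` is coherent with a probe if the machine, started in `s`,
produces the probe's observations on the probe's inputs. -/
def Coherent {S I O : Type*} (upd : I → S → S) (view : I → S → O) :
    List (I × O) → S → Prop
  | [], _ => True
  | io :: p, s => view io.1 s = io.2 ∧ Coherent upd view p (upd io.1 s)

/-- Knowledge set of a probe: the possible initial states coherent with it. -/
def Kset {S I O : Type*} (upd : I → S → S) (view : I → S → O) (Sv : Set S)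
    (p : List (I × O)) : Set S :=
  {s ∈ Sv | Coherent upd view p s}

/-- Final knowledge set of a probe: states the machine may be in afterwards. -/
def FKset {S I O : Type*} (upd : I → S → S) (view : I → S → O) (Sv : Set S)
    (p : List (I × O)) : Set S :=
  mrun upd p '' Kset upd view Sv p

/-- The probe's inputs follow the probing strategy `att`. -/
def Follows {I O : Type*} (att : List O → I) (p : List (I × O)) : Prop :=
  ∀ i (h : i < p.length), (p.get ⟨i, h⟩).1 = att ((p.map Prod.snd).take i)

/-- A probe of `att` is depleted if no realizable extension of it following `att`
refines its knowledge set. -/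
def Depleted {S I O : Type*} (upd : I → S → S) (view : I → S → O) (Sv : Set S)
    (att : List O → I) (p : List (I × O)) : Prop :=
  Follows att p ∧ ∀ q, Follows att q → p <+: q → (Kset upd view Sv q).Nonempty →
    Kset upd view Sv q = Kset upd view Sv p

/-- The knowledge sets produced by the depleted probes of strategy `att`. -/
def KnowledgeSets {S I O : Type*} (upd : I → S → S) (view : I → S → O)
    (Sv : Set S) (att : List O → I) : Set (Set S) :=
  {K | ∃ p, Depleted upd view Sv att p ∧ K = Kset upd view Sv p ∧ K.Nonempty}

/-- Cache observation: `true` for a hit, `false` for a miss. -/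
def viewCache (A : ℕ) (b : ℕ) (c : ℕ → ℕ) : Bool := decide (c b < A)

/-!
Two initial states on which the strategy produces the same probes lie in the same knowledge set
of every depleted probe, so it suffices to bound the number of distinct runs starting in `Sv`.

A FIFO cache does not change between misses, and after `A` misses it holds exactly the last `A`
missed blocks, whatever the initial state; so a run is determined by where its first `A` misses
happen. Between the `(k-1)`-st and the `k`-th miss every observation is a hit, so the inputs there
are fixed by the history; let `ψ k` count the distinct blocks, not missed before, in this `k`-th
window, up to and including the `k`-th miss (`0` if there is none). If two states agree so far and
one of them hits where the other has its `k`-th miss, its `k`-th window is strictly larger, so the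
code `ψ 0, …, ψ (A-1)` determines the run. The blocks hit in the window sit at distinct ages in
`[k, A)`, so `1 ≤ ψ k ≤ A - k + 1`; and if a state with the same `ψ 0, …, ψ (k-1)` has no `k`-th
miss, every such window consists of hits for it, so `ψ k ≤ A - k`. Either way `ψ k` takes at most
`A + 1 - k` values once the earlier ones are fixed, leaving at most
`∏ k < A, (A + 1 - k) = (A + 1)!` codes.
-/

section MealyMachine

variable {S I O : Type*} (upd : I → S → S) (view : I → S → O) (att : List O → I)

theorem mrun_append (p q : List (I × O)) (s : S) :
    mrun upd (p ++ q) s = mrun upd q (mrun upd p s) := by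
  induction p generalizing s with
  | nil => rfl
  | cons a p ih => simp [mrun, ih]

theorem coherent_append (p q : List (I × O)) (s : S) :
    Coherent upd view (p ++ q) s ↔
      Coherent upd view p s ∧ Coherent upd view q (mrun upd p s) := by
  induction p generalizing s with
  | nil => simp [Coherent, mrun]
  | cons a p ih => simp [Coherent, mrun, ih, and_assoc]

def stratProbe (s : S) : ℕ → List (I × O)
  | 0 => []
  | n + 1 =>
    let p := stratProbe s n
    let i := att (p.map Prod.snd)
    p ++ [(i, view i (mrun upd p s))]

@[simp] theorem length_stratProbe (s : S) (n : ℕ) : (stratProbe upd view att s n).length = n := by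
  induction n with
  | zero => rfl
  | succ n ih => simp [stratProbe, ih]

theorem stratProbe_prefix_of_le (s : S) {m n : ℕ} (h : m ≤ n) :
    stratProbe upd view att s m <+: stratProbe upd view att s n := by
  induction n, h using Nat.le_induction with
  | base => exact List.prefix_refl _
  | succ n _ ih => exact ih.trans (List.prefix_append _ _)

variable {att} in
theorem Follows.of_append {p q : List (I × O)} (h : Follows att (p ++ q)) : Follows att p := by
  intro i hi
  have hi' := h i (by simp; omega)
  rw [List.get_eq_getElem, List.getElem_append_left hi] at hi'
  rw [List.get_eq_getElem, hi', List.map_append,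
    List.take_append_of_le_length (by simpa using hi.le)]

theorem eq_stratProbe {p : List (I × O)} {s : S} (hf : Follows att p)
    (hc : Coherent upd view p s) : p = stratProbe upd view att s p.length := by
  induction p using List.reverseRecOn with
  | nil => rfl
  | append_singleton q x ih =>
    rw [coherent_append] at hc
    have hq := ih hf.of_append hc.1
    have hx1 : x.1 = att (q.map Prod.snd) := by
      simpa [List.getElem_append_right] using hf q.length (by simp)
    obtain ⟨i, o⟩ := x
    obtain rfl : view i (mrun upd q s) = o := hc.2.1
    simp only at hx1
    rw [List.length_append, List.length_singleton, stratProbe, ← hq, hx1]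

theorem Depleted.kset_eq {Sv : Set S} {p p' : List (I × O)} {s s' : S}
    (hp : Depleted upd view Sv att p) (hp' : Depleted upd view Sv att p')
    (hs : s ∈ Kset upd view Sv p) (hs' : s' ∈ Kset upd view Sv p')
    (hrun : stratProbe upd view att s = stratProbe upd view att s') :
    Kset upd view Sv p = Kset upd view Sv p' := by
  have hq := eq_stratProbe upd view att hp.1 hs.2
  have hq' := eq_stratProbe upd view att hp'.1 hs'.2
  rw [hrun] at hq
  rcases le_total p.length p'.length with hle | hle
  · refine (hp.2 p' hp'.1 ?_ ⟨_, hs'⟩).symm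
    rw [hq, hq']
    exact stratProbe_prefix_of_le upd view att _ hle
  · refine hp'.2 p hp.1 ?_ ⟨_, hs⟩
    rw [hq, hq']
    exact stratProbe_prefix_of_le upd view att _ hle

theorem knowledgeSets_ncard_le {γ : Type*} {Sv : Set S} (hfin : Sv.Finite) (g : S → γ)
    (hg : ∀ s ∈ Sv, ∀ s' ∈ Sv, g s = g s' →
      stratProbe upd view att s = stratProbe upd view att s') :
    (KnowledgeSets upd view Sv att).ncard ≤ (g '' Sv).ncard := by
  rcases isEmpty_or_nonempty S with hS | hS
  · simp [KnowledgeSets, Set.eq_empty_of_isEmpty]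
  refine Set.ncard_le_ncard_of_injOn (fun K => g (Classical.epsilon (· ∈ K))) ?_ ?_
    (hfin.image g)
  · rintro K ⟨p, -, rfl, hne⟩
    exact ⟨_, (Classical.epsilon_spec hne).1, rfl⟩
  · rintro K ⟨p, hp, rfl, hne⟩ K' ⟨p', hp', rfl, hne'⟩ hgK
    have hs := Classical.epsilon_spec hne
    have hs' := Classical.epsilon_spec hne'
    exact hp.kset_eq upd view att hp' hs hs' (hg _ hs.1 _ hs'.1 hgK)

end MealyMachine

open Finset in
theorem card_le_prod_of_branching {α : Type*} [DecidableEq α] (n : ℕ → ℕ) (L : ℕ)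
    (T : Finset (List α)) (hlen : ∀ l ∈ T, l.length = L)
    (hbranch : ∀ p : List α, p.length < L → ∃ V : Finset α, V.card ≤ n p.length ∧
      ∀ x, (∃ l ∈ T, p ++ [x] <+: l) → x ∈ V) :
    T.card ≤ ∏ k ∈ Finset.range L, n k := by
  induction L generalizing T with
  | zero =>
    have hT : T ⊆ {[]} := fun l hl => by simpa using hlen l hl
    simpa using Finset.card_le_card hT
  | succ L ih =>
    have hfiber : ∀ p ∈ T.image List.dropLast, #{l ∈ T | l.dropLast = p} ≤ n L := by
      intro p hp
      obtain ⟨l₀, hl₀, rfl⟩ := Finset.mem_image.mp hp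
      have hp : l₀.dropLast.length = L := by simp [hlen l₀ hl₀]
      obtain ⟨V, hV, hmem⟩ := hbranch l₀.dropLast (by omega)
      have hsub : {l ∈ T | l.dropLast = l₀.dropLast} ⊆ V.image (l₀.dropLast ++ [·]) := by
        intro l hl
        obtain ⟨hlT, hl⟩ := Finset.mem_filter.mp hl
        have hsplit := List.dropLast_append_getLast
          (List.ne_nil_of_length_pos (by rw [hlen l hlT]; omega))
        rw [hl] at hsplit
        exact Finset.mem_image.mpr
          ⟨_, hmem _ ⟨l, hlT, hsplit.symm ▸ List.prefix_refl _⟩, hsplit⟩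
      calc #{l ∈ T | l.dropLast = l₀.dropLast} ≤ #(V.image (l₀.dropLast ++ [·])) :=
            Finset.card_le_card hsub
        _ ≤ n L := Finset.card_image_le.trans (hp ▸ hV)
    have himage : #(T.image List.dropLast) ≤ ∏ k ∈ Finset.range L, n k := by
      refine ih _ (fun l hl => ?_) (fun p hp => ?_)
      · obtain ⟨l, hlT, rfl⟩ := Finset.mem_image.mp hl
        simp [hlen l hlT]
      · obtain ⟨V, hV, hmem⟩ := hbranch p (by omega)
        refine ⟨V, hV, fun x ⟨l, hl, hpre⟩ => hmem x ?_⟩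
        obtain ⟨l, hlT, rfl⟩ := Finset.mem_image.mp hl
        exact ⟨l, hlT, hpre.trans (List.dropLast_prefix l)⟩
    calc T.card ≤ n L * #(T.image List.dropLast) := Finset.card_le_mul_card_image _ _ hfiber
      _ ≤ n L * ∏ k ∈ Finset.range L, n k := Nat.mul_le_mul_left _ himage
      _ = ∏ k ∈ Finset.range (L + 1), n k := by rw [Finset.prod_range_succ, mul_comm]

section UpdFIFO

variable {A i : ℕ} {c : ℕ → ℕ}

theorem updFIFO_of_hit (h : c i < A) : updFIFO A i c = c := if_pos h

theorem updFIFO_of_miss (h : A ≤ c i) {b : ℕ} (hb : c b ≤ A) :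
    updFIFO A i c b = if b = i then 0 else min (c b + 1) A := by
  simp only [updFIFO, if_neg (Nat.not_lt.mpr h)]
  split_ifs <;> omega

theorem CacheInv.updFIFO (h : CacheInv A c) : CacheInv A (updFIFO A i c) := by
  by_cases hi : c i < A
  · rwa [updFIFO_of_hit hi]
  have hupd := fun b => updFIFO_of_miss (Nat.le_of_not_lt hi) (h.1 b)
  refine ⟨fun b => by rw [hupd]; split_ifs <;> omega, fun b b' hb hbb' => ?_⟩
  rw [hupd, hupd] at hbb'
  rw [hupd] at hb
  by_cases hbi : b = i <;> by_cases hb'i : b' = i <;>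
    simp only [hbi, hb'i, if_true, if_false] at hb hbb'
  · rw [hbi, hb'i]
  · omega
  · omega
  · exact h.2 b b' (by omega) (by omega)

end UpdFIFO

namespace FIFO

variable (A : ℕ) (att : List Bool → ℕ)

def probe (c : ℕ → ℕ) (n : ℕ) : List (ℕ × Bool) :=
  stratProbe (updFIFO A) (viewCache A) att c n

def state (c : ℕ → ℕ) (n : ℕ) : ℕ → ℕ := mrun (updFIFO A) (probe A att c n) c

def input (c : ℕ → ℕ) (n : ℕ) : ℕ := att ((probe A att c n).map Prod.snd)

def obs (c : ℕ → ℕ) (n : ℕ) : Bool := viewCache A (input A att c n) (state A att c n)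

def missCount (c : ℕ → ℕ) (n : ℕ) : ℕ := ((probe A att c n).map Prod.snd).count false

variable {A att} {c c' : ℕ → ℕ}

theorem probe_succ (n : ℕ) :
    probe A att c (n + 1) = probe A att c n ++ [(input A att c n, obs A att c n)] := rfl

theorem state_succ (n : ℕ) :
    state A att c (n + 1) = updFIFO A (input A att c n) (state A att c n) := by
  rw [state, probe_succ, mrun_append]
  rfl

theorem obs_eq_false_iff {n : ℕ} :
    obs A att c n = false ↔ A ≤ state A att c n (input A att c n) := by
  simp [obs, viewCache]

theorem obs_eq_true_iff {n : ℕ} :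
    obs A att c n = true ↔ state A att c n (input A att c n) < A := by
  simp [obs, viewCache]

theorem state_succ_of_hit {n : ℕ} (h : obs A att c n = true) :
    state A att c (n + 1) = state A att c n := by
  rw [state_succ, updFIFO_of_hit (obs_eq_true_iff.mp h)]

theorem state_succ_of_miss {n : ℕ} (h : obs A att c n = false) {b : ℕ}
    (hb : state A att c n b ≤ A) :
    state A att c (n + 1) b = if b = input A att c n then 0 else min (state A att c n b + 1) A := by
  rw [state_succ, updFIFO_of_miss (obs_eq_false_iff.mp h) hb]

theorem missCount_succ_of_hit {n : ℕ} (h : obs A att c n = true) :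
    missCount A att c (n + 1) = missCount A att c n := by
  simp [missCount, probe_succ, h]

theorem missCount_succ_of_miss {n : ℕ} (h : obs A att c n = false) :
    missCount A att c (n + 1) = missCount A att c n + 1 := by
  simp [missCount, probe_succ, h]

theorem missCount_mono : Monotone (missCount A att c) := by
  refine monotone_nat_of_le_succ fun n => ?_
  cases h : obs A att c n
  · rw [missCount_succ_of_miss h]; omega
  · rw [missCount_succ_of_hit h]

theorem obs_eq_true_of_missCount_succ_le {n : ℕ}
    (h : missCount A att c (n + 1) ≤ missCount A att c n) : obs A att c n = true := by
  by_contra ho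
  rw [missCount_succ_of_miss (by simpa using ho)] at h
  omega

theorem cacheInv_state (hc : CacheInv A c) (n : ℕ) : CacheInv A (state A att c n) := by
  induction n with
  | zero => exact hc
  | succ n ih => rw [state_succ]; exact ih.updFIFO

theorem state_eq_of_missCount_eq {u t : ℕ} (hut : u ≤ t)
    (h : missCount A att c u = missCount A att c t) : state A att c t = state A att c u := by
  induction t, hut using Nat.le_induction with
  | base => rfl
  | succ t hut ih =>
    have hmono := missCount_mono (A := A) (att := att) (c := c) hut
    cases ho : obs A att c t
    · have := missCount_succ_of_miss ho; omega
    · rw [state_succ_of_hit ho, ih (by rw [missCount_succ_of_hit ho] at h; exact h)]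

theorem state_lt_of_hit {u t : ℕ} (ho : obs A att c u = true) (hut : u ≤ t)
    (h : missCount A att c u = missCount A att c t) : state A att c t (input A att c u) < A := by
  rw [state_eq_of_missCount_eq hut h]
  exact obs_eq_true_iff.mp ho

theorem state_add_missCount_le (hc : CacheInv A c) {u t : ℕ} (hut : u ≤ t) (b : ℕ) :
    state A att c t b + missCount A att c u ≤ state A att c u b + missCount A att c t := by
  induction t, hut using Nat.le_induction with
  | base => rfl
  | succ t _ ih =>
    cases ho : obs A att c t
    · rw [state_succ_of_miss ho ((cacheInv_state hc t).1 b), missCount_succ_of_miss ho]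
      split_ifs <;> omega
    · rw [state_succ_of_hit ho, missCount_succ_of_hit ho]
      exact ih

theorem probe_eq_of_le {t u : ℕ} (h : probe A att c t = probe A att c' t) (hu : u ≤ t) :
    probe A att c u = probe A att c' u := by
  have hpre := stratProbe_prefix_of_le (updFIFO A) (viewCache A) att c hu
  have hpre' := stratProbe_prefix_of_le (updFIFO A) (viewCache A) att c' hu
  rw [List.prefix_iff_eq_take] at hpre hpre'
  simp only [length_stratProbe] at hpre hpre'
  rw [probe, probe, hpre, hpre']
  exact congrArg (List.take u) h

theorem input_eq_of_probe_eq {t u : ℕ} (h : probe A att c t = probe A att c' t) (hu : u ≤ t) :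
    input A att c u = input A att c' u := by
  rw [input, input, probe_eq_of_le h hu]

theorem missCount_eq_of_probe_eq {t u : ℕ} (h : probe A att c t = probe A att c' t)
    (hu : u ≤ t) :
    missCount A att c u = missCount A att c' u := by
  rw [missCount, missCount, probe_eq_of_le h hu]

theorem obs_eq_of_probe_eq {t u : ℕ} (h : probe A att c t = probe A att c' t) (hu : u < t) :
    obs A att c u = obs A att c' u := by
  have h' := probe_eq_of_le h hu
  rw [probe_succ, probe_succ, probe_eq_of_le h hu.le] at h'
  exact (by simpa using h' : _ ∧ _).2

variable (A att) in
def IsMiss (c : ℕ → ℕ) (k t : ℕ) : Prop := obs A att c t = false ∧ missCount A att c t = k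

variable (A att) in
def HasMiss (c : ℕ → ℕ) (k : ℕ) : Prop := ∃ t, IsMiss A att c k t

variable (A att) in
noncomputable def missTime (c : ℕ → ℕ) (k : ℕ) : ℕ := sInf {t | IsMiss A att c k t}

variable (A att) in
def MissedBefore (c : ℕ → ℕ) (k q : ℕ) : Prop :=
  ∃ u, obs A att c u = false ∧ missCount A att c u < k ∧ input A att c u = q

theorem lt_of_missCount_lt {u t : ℕ} (h : missCount A att c u < missCount A att c t) : u < t :=
  lt_of_not_ge fun htu => (missCount_mono htu).not_gt h

theorem IsMiss.unique {k t t' : ℕ} (h : IsMiss A att c k t) (h' : IsMiss A att c k t') :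
    t = t' := by
  by_contra hne
  wlog hlt : t < t' generalizing t t'
  · exact this h' h (Ne.symm hne) (by omega)
  have := missCount_mono (A := A) (att := att) (c := c) (Nat.succ_le_of_lt hlt)
  rw [missCount_succ_of_miss h.1, h.2, h'.2] at this
  omega

theorem isMiss_missTime {k : ℕ} (h : HasMiss A att c k) : IsMiss A att c k (missTime A att c k) :=
  Nat.sInf_mem h

theorem IsMiss.missTime_eq {k t : ℕ} (h : IsMiss A att c k t) : missTime A att c k = t :=
  (isMiss_missTime ⟨t, h⟩).unique h

theorem obs_eq_true_of_ne_missTime {k u : ℕ} (hu : missCount A att c u = k)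
    (hne : u ≠ missTime A att c k) : obs A att c u = true := by
  by_contra ho
  exact hne (IsMiss.missTime_eq ⟨by simpa using ho, hu⟩).symm

theorem missCount_le_of_not_hasMiss {k : ℕ} (h : ¬ HasMiss A att c k) (u : ℕ) :
    missCount A att c u ≤ k := by
  induction u with
  | zero => exact Nat.zero_le k
  | succ u ih =>
    cases ho : obs A att c u
    · rw [missCount_succ_of_miss ho]
      exact Nat.succ_le_of_lt (lt_of_le_of_ne ih fun hk => h ⟨u, ho, hk⟩)
    · rwa [missCount_succ_of_hit ho]

theorem missedBefore_iff_of_probe_eq {t k q : ℕ} (h : probe A att c t = probe A att c' t)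
    (hk : k ≤ missCount A att c t) :
    MissedBefore A att c k q ↔ MissedBefore A att c' k q := by
  have hk' : k ≤ missCount A att c' t := missCount_eq_of_probe_eq h le_rfl ▸ hk
  constructor
  · rintro ⟨u, ho, hu, rfl⟩
    have hut : u < t := lt_of_missCount_lt (A := A) (att := att) (c := c) (by omega)
    exact ⟨u, obs_eq_of_probe_eq h hut ▸ ho, missCount_eq_of_probe_eq h hut.le ▸ hu,
      (input_eq_of_probe_eq h hut.le).symm⟩
  · rintro ⟨u, ho, hu, rfl⟩
    have hut : u < t := lt_of_missCount_lt (A := A) (att := att) (c := c') (by omega)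
    exact ⟨u, (obs_eq_of_probe_eq h hut).symm ▸ ho,
      (missCount_eq_of_probe_eq h hut.le).symm ▸ hu,
      input_eq_of_probe_eq h hut.le⟩

theorem state_eq_min_of_not_missedBefore (hc : CacheInv A c) {t b : ℕ}
    (hb : ¬ MissedBefore A att c (missCount A att c t) b) :
    state A att c t b = min (c b + missCount A att c t) A := by
  induction t with
  | zero => have := hc.1 b; exact (min_eq_left this).symm
  | succ t ih =>
    cases ho : obs A att c t
    · have hbt : b ≠ input A att c t := fun hbt =>
        hb ⟨t, ho, by rw [missCount_succ_of_miss ho]; omega, hbt.symm⟩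
      have ih := ih fun ⟨u, hu, hut, hub⟩ =>
        hb ⟨u, hu, hut.trans_le (missCount_mono (Nat.le_succ t)), hub⟩
      rw [state_succ_of_miss ho ((cacheInv_state hc t).1 b), if_neg hbt, ih,
        missCount_succ_of_miss ho]
      omega
    · rw [missCount_succ_of_hit ho] at hb ⊢
      rw [state_succ_of_hit ho, ih hb]

open scoped Classical in
variable (A att) in
noncomputable def window (c : ℕ → ℕ) (k : ℕ) : Finset ℕ :=
  {q ∈ {u ∈ Finset.range (missTime A att c k + 1) | missCount A att c u = k}.image
    (input A att c) | ¬ MissedBefore A att c k q}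

open scoped Classical in
variable (A att) in
noncomputable def freshCount (c : ℕ → ℕ) (k : ℕ) : ℕ :=
  if HasMiss A att c k then (window A att c k).card else 0

theorem mem_window {k q : ℕ} : q ∈ window A att c k ↔
    (∃ u ≤ missTime A att c k, missCount A att c u = k ∧ input A att c u = q) ∧
      ¬ MissedBefore A att c k q := by
  simp [window, and_assoc]

theorem input_missTime_mem_window (hc : CacheInv A c) {k : ℕ} (h : HasMiss A att c k)
    (hk : k ≤ A) :
    input A att c (missTime A att c k) ∈ window A att c k := by
  have hT := isMiss_missTime h
  refine mem_window.mpr ⟨⟨_, le_rfl, hT.2, rfl⟩, ?_⟩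
  rintro ⟨u, ho, hu, hq⟩
  have huT : u + 1 ≤ missTime A att c k := lt_of_missCount_lt (hT.2 ▸ hu)
  have hfresh : state A att c (u + 1) (input A att c u) = 0 := by
    rw [state_succ_of_miss ho ((cacheInv_state hc u).1 _), if_pos rfl]
  have hage := state_add_missCount_le (att := att) hc huT (input A att c u)
  rw [hfresh, missCount_succ_of_miss ho, hT.2, hq] at hage
  have := obs_eq_false_iff.mp hT.1
  omega

theorem state_lt_of_mem_window {k q : ℕ} (h : HasMiss A att c k) (hq : q ∈ window A att c k)
    (hne : q ≠ input A att c (missTime A att c k)) :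
    state A att c (missTime A att c k) q < A := by
  obtain ⟨⟨u, huT, hu, rfl⟩, -⟩ := mem_window.mp hq
  have hne : u ≠ missTime A att c k := fun huT => hne (huT ▸ rfl)
  exact state_lt_of_hit (obs_eq_true_of_ne_missTime hu hne) huT
    (hu.trans (isMiss_missTime h).2.symm)

theorem card_le_of_cached_of_not_missedBefore (hc : CacheInv A c) {t : ℕ} (W : Finset ℕ)
    (hW : ∀ q ∈ W, state A att c t q < A ∧ ¬ MissedBefore A att c (missCount A att c t) q) :
    W.card ≤ A - missCount A att c t := by
  have hmaps : ∀ q ∈ W, state A att c t q ∈ Finset.Ico (missCount A att c t) A := by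
    intro q hq
    have := state_eq_min_of_not_missedBefore hc (hW q hq).2
    have := (hW q hq).1
    simp only [Finset.mem_Ico]
    omega
  have hinj : Set.InjOn (state A att c t) W := fun q hq q' _ hqq' =>
    (cacheInv_state hc t).2 q q' (hW q hq).1 hqq'
  simpa using Finset.card_le_card_of_injOn _ hmaps hinj

theorem freshCount_of_hasMiss {k : ℕ} (h : HasMiss A att c k) :
    freshCount A att c k = (window A att c k).card := if_pos h

theorem freshCount_of_not_hasMiss {k : ℕ} (h : ¬ HasMiss A att c k) : freshCount A att c k = 0 :=
  if_neg h

theorem freshCount_eq_zero_iff (hc : CacheInv A c) {k : ℕ} (hk : k ≤ A) :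
    freshCount A att c k = 0 ↔ ¬ HasMiss A att c k := by
  refine ⟨fun h0 h => ?_, freshCount_of_not_hasMiss⟩
  rw [freshCount_of_hasMiss h] at h0
  exact Finset.card_ne_zero_of_mem (input_missTime_mem_window hc h hk) h0

theorem freshCount_le (hc : CacheInv A c) {k : ℕ} (hk : k ≤ A) :
    freshCount A att c k ≤ A - k + 1 := by
  by_cases h : HasMiss A att c k
  · have hT := isMiss_missTime h
    have hW := card_le_of_cached_of_not_missedBefore hc
      ((window A att c k).erase (input A att c (missTime A att c k))) fun q hq => by
        obtain ⟨hne, hq⟩ := Finset.mem_erase.mp hq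
        rw [hT.2]
        exact ⟨state_lt_of_mem_window h hq hne, (mem_window.mp hq).2⟩
    rw [Finset.card_erase_of_mem (input_missTime_mem_window hc h hk), hT.2] at hW
    rw [freshCount_of_hasMiss h]
    omega
  · rw [freshCount_of_not_hasMiss h]
    exact Nat.zero_le _

theorem state_lt_of_mem_window_of_hit {j t q : ℕ} (h : probe A att c t = probe A att c' t)
    (ht : IsMiss A att c j t) (ho' : obs A att c' t = true) (hq : q ∈ window A att c j) :
    state A att c' t q < A := by
  obtain ⟨⟨u, hut, hu, rfl⟩, -⟩ := mem_window.mp hq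
  rw [ht.missTime_eq] at hut
  have hobs : obs A att c' u = true := by
    rcases hut.lt_or_eq with hlt | rfl
    · rw [← obs_eq_of_probe_eq h hlt]
      exact obs_eq_true_of_ne_missTime hu (ht.missTime_eq ▸ hlt.ne)
    · exact ho'
  rw [input_eq_of_probe_eq h hut]
  refine state_lt_of_hit hobs hut ?_
  rw [← missCount_eq_of_probe_eq h hut, ← missCount_eq_of_probe_eq h le_rfl, hu, ht.2]

theorem obs_eq_false_of_freshCount_eq (hc : CacheInv A c) (hc' : CacheInv A c') {j t : ℕ}
    (hj : j < A) (hψ : freshCount A att c j = freshCount A att c' j)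
    (h : probe A att c t = probe A att c' t) (ht : IsMiss A att c j t) :
    obs A att c' t = false := by
  by_contra ho'
  rw [Bool.not_eq_false] at ho'
  have hM' : HasMiss A att c' j := by
    by_contra hM'
    rw [freshCount_of_not_hasMiss hM', freshCount_eq_zero_iff hc hj.le] at hψ
    exact hψ ⟨t, ht⟩
  have ht' := isMiss_missTime hM'
  set t' := missTime A att c' j
  have hmc : missCount A att c' t = j := missCount_eq_of_probe_eq h le_rfl ▸ ht.2
  have htt' : t < t' := by
    rcases lt_trichotomy t t' with hlt | rfl | hgt
    · exact hlt
    · exact absurd ht'.1 (by simp [t', ho'])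
    · have : IsMiss A att c j t' := ⟨(obs_eq_of_probe_eq h hgt).symm ▸ ht'.1,
        (missCount_eq_of_probe_eq h hgt.le).symm ▸ ht'.2⟩
      exact absurd (this.unique ht) hgt.ne
  -- The `j`-th window of `c'` contains that of `c` and also the block of its own, later,
  -- `j`-th miss, which `c'` would have hit had it been in the window of `c`.
  have hsub : window A att c j ⊆ window A att c' j := fun q hq => by
    obtain ⟨⟨u, hut, hu, rfl⟩, hnew⟩ := mem_window.mp hq
    rw [ht.missTime_eq] at hut
    refine mem_window.mpr ⟨⟨u, by omega, (missCount_eq_of_probe_eq h hut) ▸ hu,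
      (input_eq_of_probe_eq h hut).symm⟩, (missedBefore_iff_of_probe_eq h ht.2.ge).not.mp hnew⟩
  have hnot : input A att c' t' ∉ window A att c j := fun hq => by
    have hlt := state_lt_of_mem_window_of_hit h ht ho' hq
    rw [← state_eq_of_missCount_eq htt'.le (hmc.trans ht'.2.symm)] at hlt
    exact absurd (obs_eq_false_iff.mp ht'.1) (not_le.mpr hlt)
  have := Finset.card_lt_card
    ⟨hsub, fun hsup => hnot (hsup (input_missTime_mem_window hc' hM' hj.le))⟩
  rw [freshCount_of_hasMiss ⟨t, ht⟩, freshCount_of_hasMiss hM'] at hψ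
  omega

theorem obs_eq_of_freshCount_eq (hc : CacheInv A c) (hc' : CacheInv A c') {t : ℕ}
    (hA : missCount A att c t < A)
    (hψ : freshCount A att c (missCount A att c t) = freshCount A att c' (missCount A att c t))
    (h : probe A att c t = probe A att c' t) : obs A att c t = obs A att c' t := by
  have hmc := missCount_eq_of_probe_eq h le_rfl
  cases ho : obs A att c t
  · exact (obs_eq_false_of_freshCount_eq hc hc' hA hψ h ⟨ho, rfl⟩).symm
  · cases ho' : obs A att c' t
    · have := obs_eq_false_of_freshCount_eq hc' hc hA hψ.symm h.symm ⟨ho', hmc.symm⟩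
      rw [ho] at this
      exact this
    · rfl

theorem probe_eq_of_freshCount_eq (hc : CacheInv A c) (hc' : CacheInv A c') {k : ℕ} (hk : k ≤ A)
    (hψ : ∀ j < k, freshCount A att c j = freshCount A att c' j) {t : ℕ}
    (ht : missCount A att c t ≤ k) (ht' : missCount A att c' t ≤ k) :
    probe A att c t = probe A att c' t := by
  induction t with
  | zero => rfl
  | succ t ih =>
    have hpr := ih ((missCount_mono t.le_succ).trans ht) ((missCount_mono t.le_succ).trans ht')
    have hmc := missCount_eq_of_probe_eq hpr le_rfl
    have hobs : obs A att c t = obs A att c' t := by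
      rcases (missCount_mono (A := A) (att := att) (c := c) t.le_succ).trans ht |>.lt_or_eq
        with hlt | heq
      · exact obs_eq_of_freshCount_eq hc hc' (by omega) (hψ _ hlt) hpr
      · rw [obs_eq_true_of_missCount_succ_le (by omega),
          obs_eq_true_of_missCount_succ_le (by omega)]
    rw [probe_succ, probe_succ, hpr, input_eq_of_probe_eq hpr le_rfl, hobs]

-- Ages below the miss count are those of the blocks missed so far, which the probe records.
theorem min_state_missCount_eq_of_probe_eq (hc : CacheInv A c) (hc' : CacheInv A c') {t : ℕ}
    (h : probe A att c t = probe A att c' t) {u : ℕ} (hu : u ≤ t) (b : ℕ) :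
    min (state A att c u b) (missCount A att c u) =
      min (state A att c' u b) (missCount A att c u) := by
  induction u with
  | zero => simp [missCount, probe, stratProbe]
  | succ u ih =>
    have hobs := obs_eq_of_probe_eq h hu
    have hinp := input_eq_of_probe_eq h (u.le_succ.trans hu)
    cases ho : obs A att c u
    · have ho' : obs A att c' u = false := hobs ▸ ho
      rw [state_succ_of_miss ho ((cacheInv_state hc u).1 b),
        state_succ_of_miss ho' ((cacheInv_state hc' u).1 b), missCount_succ_of_miss ho, ← hinp]
      have := ih (u.le_succ.trans hu)
      split_ifs <;> omega
    · have ho' : obs A att c' u = true := hobs ▸ ho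
      rw [state_succ_of_hit ho, state_succ_of_hit ho', missCount_succ_of_hit ho]
      exact ih (u.le_succ.trans hu)

theorem state_eq_of_probe_eq (hc : CacheInv A c) (hc' : CacheInv A c') {t : ℕ}
    (h : probe A att c t = probe A att c' t) (hA : A ≤ missCount A att c t) :
    state A att c t = state A att c' t := by
  funext b
  have := min_state_missCount_eq_of_probe_eq hc hc' h le_rfl b
  have := (cacheInv_state (att := att) hc t).1 b
  have := (cacheInv_state (att := att) hc' t).1 b
  omega

theorem freshCount_le_of_not_hasMiss (hc : CacheInv A c) (hc' : CacheInv A c') {k : ℕ}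
    (hk : k ≤ A) (hψ : ∀ j < k, freshCount A att c j = freshCount A att c' j)
    (hM : HasMiss A att c k) (hM' : ¬ HasMiss A att c' k) : freshCount A att c k ≤ A - k := by
  have ht := isMiss_missTime hM
  set t := missTime A att c k
  have hpr := probe_eq_of_freshCount_eq hc hc' hk hψ ht.2.le (missCount_le_of_not_hasMiss hM' t)
  have hmc : missCount A att c' t = k := missCount_eq_of_probe_eq hpr le_rfl ▸ ht.2
  have ho' : obs A att c' t = true := by
    by_contra ho
    exact hM' ⟨t, by simpa using ho, hmc⟩
  have hW := card_le_of_cached_of_not_missedBefore hc' (window A att c k) fun q hq => by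
    refine ⟨state_lt_of_mem_window_of_hit hpr ht ho' hq, ?_⟩
    rw [hmc, ← missedBefore_iff_of_probe_eq hpr ht.2.ge]
    exact (mem_window.mp hq).2
  rwa [hmc, ← freshCount_of_hasMiss hM] at hW

theorem probe_eq_of_forall_freshCount_eq (hc : CacheInv A c) (hc' : CacheInv A c')
    (hψ : ∀ j < A, freshCount A att c j = freshCount A att c' j) :
    probe A att c = probe A att c' := by
  funext t
  induction t with
  | zero => rfl
  | succ t ih =>
    have hobs : obs A att c t = obs A att c' t := by
      by_cases hA : missCount A att c t < A
      · exact obs_eq_of_freshCount_eq hc hc' hA (hψ _ hA) ih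
      · rw [obs, obs, input_eq_of_probe_eq ih le_rfl,
          state_eq_of_probe_eq hc hc' ih (Nat.le_of_not_lt hA)]
    rw [probe_succ, probe_succ, ih, input_eq_of_probe_eq ih le_rfl, hobs]

variable (A att) in
noncomputable def code (c : ℕ → ℕ) : List ℕ := (List.range A).map (freshCount A att c)

theorem probe_eq_of_code_eq (hc : CacheInv A c) (hc' : CacheInv A c')
    (h : code A att c = code A att c') : probe A att c = probe A att c' :=
  probe_eq_of_forall_freshCount_eq hc hc' fun j hj =>
    List.map_inj_left.mp h j (List.mem_range.mpr hj)

theorem eq_freshCount_of_append_prefix_code {p : List ℕ} {x : ℕ}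
    (h : p ++ [x] <+: code A att c) :
    p = (List.range p.length).map (freshCount A att c) ∧ x = freshCount A att c p.length := by
  have hlen : p.length + 1 ≤ A := by simpa [code] using h.length_le
  rw [List.prefix_iff_eq_take, code, ← List.map_take, List.take_range] at h
  simp only [List.length_append, List.length_singleton, min_eq_left hlen, List.range_succ,
    List.map_append, List.map_singleton] at h
  simpa using List.append_inj' h rfl

theorem code_branching {Sv : Set (ℕ → ℕ)} (hinv : ∀ c ∈ Sv, CacheInv A c) (p : List ℕ)
    (hp : p.length < A) : ∃ V : Finset ℕ, V.card ≤ A + 1 - p.length ∧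
      ∀ x, (∃ c ∈ Sv, p ++ [x] <+: code A att c) → x ∈ V := by
  by_cases h0 : ∃ c₀ ∈ Sv, p ++ [0] <+: code A att c₀
  · obtain ⟨c₀, hc₀, hpre₀⟩ := h0
    obtain ⟨hp₀, hx₀⟩ := eq_freshCount_of_append_prefix_code hpre₀
    have hM₀ := (freshCount_eq_zero_iff (hinv c₀ hc₀) hp.le).mp hx₀.symm
    refine ⟨Finset.range (A - p.length + 1), by simp; omega, ?_⟩
    rintro x ⟨c, hc, hpre⟩
    obtain ⟨hpc, rfl⟩ := eq_freshCount_of_append_prefix_code hpre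
    rw [Finset.mem_range, Nat.lt_succ_iff]
    by_cases hM : HasMiss A att c p.length
    · refine freshCount_le_of_not_hasMiss (hinv c hc) (hinv c₀ hc₀) hp.le (fun j hj => ?_)
        hM hM₀
      exact List.map_inj_left.mp (hpc.symm.trans hp₀) j (List.mem_range.mpr hj)
    · rw [freshCount_of_not_hasMiss hM]
      exact Nat.zero_le _
  · refine ⟨Finset.Icc 1 (A - p.length + 1), by simp; omega, ?_⟩
    rintro x ⟨c, hc, hpre⟩
    have hx0 : x ≠ 0 := by
      rintro rfl
      exact h0 ⟨c, hc, hpre⟩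
    obtain ⟨-, rfl⟩ := eq_freshCount_of_append_prefix_code hpre
    rw [Finset.mem_Icc]
    exact ⟨Nat.one_le_iff_ne_zero.mpr hx0, freshCount_le (hinv c hc) hp.le⟩

theorem prod_range_succ_sub_eq_factorial (A : ℕ) :
    ∏ k ∈ Finset.range A, (A + 1 - k) = (A + 1).factorial := by
  rw [← Nat.descFactorial_eq_prod_range, ← Nat.factorial_mul_descFactorial (Nat.le_succ A)]
  simp

theorem code_image_ncard_le {Sv : Set (ℕ → ℕ)} (hfin : Sv.Finite)
    (hinv : ∀ c ∈ Sv, CacheInv A c) : (code A att '' Sv).ncard ≤ (A + 1).factorial := by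
  have hfin' := hfin.image (code A att)
  rw [Set.ncard_eq_toFinset_card _ hfin', ← prod_range_succ_sub_eq_factorial]
  refine card_le_prod_of_branching _ A _ (fun l hl => ?_) fun p hp => ?_
  · obtain ⟨c, -, rfl⟩ := (Set.Finite.mem_toFinset hfin').mp hl
    simp [code]
  · obtain ⟨V, hV, hmem⟩ := code_branching (att := att) hinv p hp
    refine ⟨V, hV, fun x ⟨l, hl, hpre⟩ => hmem x ?_⟩
    obtain ⟨c, hc, rfl⟩ := (Set.Finite.mem_toFinset hfin').mp hl
    exact ⟨c, hc, hpre⟩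

end FIFO

/-- For a FIFO cache of associativity `A` and a shared-memory attacker (who may
input any block), any probing strategy partitions any finite set of possible
initial cache states into at most `(A+1)!` knowledge sets. -/
theorem fifo_extraction_le (A : ℕ) (Sv : Set (ℕ → ℕ)) (hfin : Sv.Finite)
    (hinv : ∀ c ∈ Sv, CacheInv A c) (att : List Bool → ℕ) :
    (KnowledgeSets (updFIFO A) (viewCache A) Sv att).ncard ≤ Nat.factorial (A + 1) :=
  calc (KnowledgeSets (updFIFO A) (viewCache A) Sv att).ncard ≤ (FIFO.code A att '' Sv).ncard :=
        knowledgeSets_ncard_le _ _ att hfin _ fun c hc c' hc' h =>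
          FIFO.probe_eq_of_code_eq (hinv c hc) (hinv c' hc') h
    _ ≤ (A + 1).factorial := FIFO.code_image_ncard_le hfin hinv
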